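/- arXiv:1811.05761 — 2 statements merged into one kernel-verified Lean document; each statement's English description precedes it below -/
import Mathlib

section
/- Let T be the random weighted shift associated with i.i.d. nonnegative bounded random variables (X_n)_{n≥1}. If P(X_1 = 0) > 0, then almost surely: the set of eigenvalues of T(ω) equals {0}, the set of eigenvalues of the Hilbert-space adjoint T(ω)* equals {0}, and both ker T(ω) and ker T(ω)* are infinite-dimensional. -/
open MeasureTheory ProbabilityTheory Filter

noncomputable section

/-- `ℓ²(ℕ, ℂ)`, the separable complex Hilbert space. -/
abbrev Hil : Type := lp (fun _ : ℕ => ℂ) 2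

/-- The orthonormal basis `(e_n)` of `ℓ²(ℕ, ℂ)` (0-indexed: `el n` is the paper's `e_{n+1}`). -/
def el (n : ℕ) : Hil := lp.single 2 n 1

/-- The essential range of a real random variable: the set of `y` such that
`P(|f - y| < ε) > 0` for every `ε > 0`. -/
def essRange {Ω : Type*} [MeasurableSpace Ω] (P : Measure Ω) (f : Ω → ℝ) : Set ℝ :=
  {y : ℝ | ∀ ε > 0, 0 < P {ω | |f ω - y| < ε}}

local notation "⟪" x ", " y "⟫" => @inner ℂ _ _ x y

lemma el_apply (n m : ℕ) : (el n : ∀ _ : ℕ, ℂ) m = if m = n then 1 else 0 := by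
  simp [el, lp.single_apply, Pi.single_apply]

lemma coord_eq_inner (x : Hil) (k : ℕ) : ⟪el k, x⟫ = (x : ∀ _ : ℕ, ℂ) k := by
  rw [el, lp.inner_single_left]
  simp

lemma el_ne_zero (n : ℕ) : el n ≠ 0 := by
  intro h
  have := congrArg (fun x : Hil => (x : ∀ _ : ℕ, ℂ) n) h
  simp [el_apply, lp.coeFn_zero] at this

lemma orthonormal_el : Orthonormal ℂ el := by
  rw [orthonormal_iff_ite]
  intro i j
  rw [coord_eq_inner, el_apply]


section Det

variable (a : ℕ → ℝ) (T : Hil →L[ℂ] Hil)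
  (hT : ∀ n, T (el n) = (a n : ℂ) • el (n + 1))

include hT

lemma adj_coord (x : Hil) (n : ℕ) :
    (ContinuousLinearMap.adjoint T x : ∀ _ : ℕ, ℂ) n = (a n : ℂ) * x (n + 1) := by
  rw [← coord_eq_inner, ContinuousLinearMap.adjoint_inner_right, hT, inner_smul_left,
    coord_eq_inner]
  simp

lemma adj_el_zero : ContinuousLinearMap.adjoint T (el 0) = 0 := by
  ext n
  rw [adj_coord a T hT, el_apply]
  simp

lemma adj_el_succ (m : ℕ) :
    ContinuousLinearMap.adjoint T (el (m + 1)) = (a m : ℂ) • el m := by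
  ext n
  rw [adj_coord a T hT, el_apply, lp.coeFn_smul, Pi.smul_apply, el_apply]
  by_cases h : n = m <;> simp [h]

lemma T_coord_zero (x : Hil) : (T x : ∀ _ : ℕ, ℂ) 0 = 0 := by
  rw [← coord_eq_inner, ← ContinuousLinearMap.adjoint_inner_left, adj_el_zero a T hT,
    inner_zero_left]

lemma T_coord_succ (x : Hil) (n : ℕ) :
    (T x : ∀ _ : ℕ, ℂ) (n + 1) = (a n : ℂ) * x n := by
  rw [← coord_eq_inner, ← ContinuousLinearMap.adjoint_inner_left, adj_el_succ a T hT,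
    inner_smul_left, coord_eq_inner]
  simp


lemma eig_T (hinf : {n | a n = 0}.Infinite) :
    {l : ℂ | ∃ x : Hil, x ≠ 0 ∧ T x = l • x} = {0} := by
  apply Set.eq_singleton_iff_unique_mem.2
  constructor
  · obtain ⟨n₀, hn₀⟩ := hinf.nonempty
    refine ⟨el n₀, el_ne_zero n₀, ?_⟩
    rw [hT, hn₀]
    simp
  · rintro l ⟨x, hx, hTx⟩
    by_contra hl
    apply hx
    have hall : ∀ n, (x : ∀ _ : ℕ, ℂ) n = 0 := by
      intro n
      induction n with
      | zero =>
        have h0 : (T x : ∀ _ : ℕ, ℂ) 0 = l * x 0 := by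
          rw [hTx, lp.coeFn_smul, Pi.smul_apply, smul_eq_mul]
        rw [T_coord_zero a T hT] at h0
        exact (mul_eq_zero.1 h0.symm).resolve_left hl
      | succ n ih =>
        have h0 : (T x : ∀ _ : ℕ, ℂ) (n + 1) = l * x (n + 1) := by
          rw [hTx, lp.coeFn_smul, Pi.smul_apply, smul_eq_mul]
        rw [T_coord_succ a T hT, ih, mul_zero] at h0
        exact (mul_eq_zero.1 h0.symm).resolve_left hl
    ext n
    simp [hall n]

lemma eig_adj (hinf : {n | a n = 0}.Infinite) :
    {l : ℂ | ∃ x : Hil, x ≠ 0 ∧ ContinuousLinearMap.adjoint T x = l • x} = {0} := by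
  apply Set.eq_singleton_iff_unique_mem.2
  constructor
  · refine ⟨el 0, el_ne_zero 0, ?_⟩
    rw [adj_el_zero a T hT]
    simp
  · rintro l ⟨x, hx, hTx⟩
    by_contra hl
    apply hx
    have hrec : ∀ n, l * (x : ∀ _ : ℕ, ℂ) n = (a n : ℂ) * x (n + 1) := by
      intro n
      have h0 : (ContinuousLinearMap.adjoint T x : ∀ _ : ℕ, ℂ) n = l * x n := by
        rw [hTx, lp.coeFn_smul, Pi.smul_apply, smul_eq_mul]
      rw [adj_coord a T hT] at h0
      exact h0.symm
    have hS : ∀ n, a n = 0 → (x : ∀ _ : ℕ, ℂ) n = 0 := by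
      intro n hn
      have := hrec n
      rw [hn] at this
      simp only [Complex.ofReal_zero, zero_mul] at this
      exact (mul_eq_zero.1 this).resolve_left hl
    have hstep : ∀ n, (x : ∀ _ : ℕ, ℂ) (n + 1) = 0 → (x : ∀ _ : ℕ, ℂ) n = 0 := by
      intro n hn
      have := hrec n
      rw [hn, mul_zero] at this
      exact (mul_eq_zero.1 this).resolve_left hl
    have hclaim : ∀ d k, (x : ∀ _ : ℕ, ℂ) (k + d) = 0 → (x : ∀ _ : ℕ, ℂ) k = 0 := by
      intro d
      induction d with
      | zero => intro k hk; exact hk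
      | succ d ih =>
        intro k hk
        apply hstep
        apply ih (k + 1)
        rw [show k + 1 + d = k + (d + 1) by omega]
        exact hk
    have hall : ∀ n, (x : ∀ _ : ℕ, ℂ) n = 0 := by
      intro m
      obtain ⟨n, hnS, hmn⟩ := hinf.exists_gt m
      exact hclaim (n - m) m (by rw [show m + (n - m) = n by omega]; exact hS n hnS)
    ext n
    simp [hall n]

lemma ker_T_infdim (hinf : {n | a n = 0}.Infinite) :
    ¬ FiniteDimensional ℂ (LinearMap.ker (T : Hil →ₗ[ℂ] Hil)) := by
  intro hfd
  have hmem : ∀ n ∈ {n | a n = 0}, el n ∈ LinearMap.ker (T : Hil →ₗ[ℂ] Hil) := by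
    intro n hn
    rw [LinearMap.mem_ker, ContinuousLinearMap.coe_coe, hT, hn]
    simp
  have hli : LinearIndependent ℂ
      (fun i : {n | a n = 0} => (⟨el i, hmem i i.2⟩ : LinearMap.ker (T : Hil →ₗ[ℂ] Hil))) := by
    apply LinearIndependent.of_comp (LinearMap.ker (T : Hil →ₗ[ℂ] Hil)).subtype
    exact orthonormal_el.linearIndependent.comp _ Subtype.val_injective
  have : Infinite {n | a n = 0} := hinf.to_subtype
  exact absurd hli.finite (by rw [not_finite_iff_infinite]; infer_instance)

lemma ker_adj_infdim (hinf : {n | a n = 0}.Infinite) :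
    ¬ FiniteDimensional ℂ (LinearMap.ker (ContinuousLinearMap.adjoint T : Hil →ₗ[ℂ] Hil)) := by
  intro hfd
  have hmem : ∀ n ∈ {n | a n = 0}, el (n + 1) ∈
      LinearMap.ker (ContinuousLinearMap.adjoint T : Hil →ₗ[ℂ] Hil) := by
    intro n hn
    rw [LinearMap.mem_ker, ContinuousLinearMap.coe_coe, adj_el_succ a T hT, hn]
    simp
  have hli : LinearIndependent ℂ
      (fun i : {n | a n = 0} =>
        (⟨el (i + 1), hmem i i.2⟩ : LinearMap.ker (ContinuousLinearMap.adjoint T : Hil →ₗ[ℂ] Hil))) := by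
    apply LinearIndependent.of_comp (LinearMap.ker (ContinuousLinearMap.adjoint T : Hil →ₗ[ℂ] Hil)).subtype
    exact orthonormal_el.linearIndependent.comp (fun i : {n | a n = 0} => (i : ℕ) + 1)
      (fun i j h => Subtype.ext (by simpa using h))
  have : Infinite {n | a n = 0} := hinf.to_subtype
  exact absurd hli.finite (by rw [not_finite_iff_infinite]; infer_instance)

end Det

lemma ae_infinitely_many_zeros
    {Ω : Type*} [MeasurableSpace Ω] (P : Measure Ω) [IsProbabilityMeasure P]
    (X : ℕ → Ω → ℝ)
    (hmeas : ∀ n, Measurable (X n))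
    (hindep : iIndepFun X P)
    (hident : ∀ n, IdentDistrib (X n) (X 0) P P)
    (hzero : 0 < P {ω | X 0 ω = 0}) :
    ∀ᵐ ω ∂P, {n | X n ω = 0}.Infinite := by
  set s : ℕ → Set Ω := fun n => X n ⁻¹' {0} with hs
  have hsm : ∀ n, MeasurableSet (s n) := fun n => hmeas n (measurableSet_singleton 0)
  have hIndepSet : iIndepSet s P := by
    rw [iIndepSet_iff_iIndep]
    have h1 : iIndep (fun i => MeasurableSpace.comap (X i) inferInstance) P :=
      (iIndepFun_iff_iIndep _ X P).1 hindep
    have hle : ∀ i, MeasurableSpace.generateFrom {s i} ≤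
        MeasurableSpace.comap (X i) inferInstance := by
      intro i
      apply MeasurableSpace.generateFrom_le
      rintro t rfl
      exact ⟨{0}, measurableSet_singleton 0, rfl⟩
    rw [iIndep_iff]
    intro s' f hf
    exact (iIndep_iff _ P).1 h1 s' (fun i hi => hle i _ (hf i hi))
  have hPs : ∀ n, P (s n) = P (s 0) := fun n =>
    (hident n).measure_mem_eq (measurableSet_singleton 0)
  have hs0 : P (s 0) ≠ 0 := by
    have : {ω | X 0 ω = 0} = s 0 := rfl
    rw [← this]
    exact hzero.ne'
  have htsum : (∑' n, P (s n)) = ⊤ := by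
    rw [tsum_congr hPs]
    exact ENNReal.tsum_const_eq_top_of_ne_zero hs0
  have hone : P (limsup s atTop) = 1 := measure_limsup_eq_one hsm hIndepSet htsum
  have hae : ∀ᵐ ω ∂P, ω ∈ limsup s atTop := by
    rw [ae_mem_iff_measure_eq (MeasurableSet.measurableSet_limsup hsm).nullMeasurableSet]
    rw [hone, measure_univ]
  filter_upwards [hae] with ω hω
  rw [mem_limsup_iff_frequently_mem] at hω
  rw [← Nat.frequently_atTop_iff_infinite]
  exact hω

/-- if `P(X_1 = 0) > 0` then almost surely the eigenvalues of `T(ω)` and of its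
adjoint are exactly `{0}`, and both kernels are infinite dimensional. -/
theorem stmt_1
    {Ω : Type*} [MeasurableSpace Ω] (P : Measure Ω) [IsProbabilityMeasure P]
    (X : ℕ → Ω → ℝ) (C : ℝ)
    (hmeas : ∀ n, Measurable (X n))
    (hbdd : ∀ n ω, 0 ≤ X n ω ∧ X n ω ≤ C)
    (hindep : iIndepFun X P)
    (hident : ∀ n, IdentDistrib (X n) (X 0) P P)
    (T : Ω → Hil →L[ℂ] Hil)
    (hT : ∀ ω n, T ω (el n) = (X n ω : ℂ) • el (n + 1))
    (hzero : 0 < P {ω | X 0 ω = 0}) :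
    ∀ᵐ ω ∂P,
      {l : ℂ | ∃ x : Hil, x ≠ 0 ∧ T ω x = l • x} = {0} ∧
      {l : ℂ | ∃ x : Hil, x ≠ 0 ∧ ContinuousLinearMap.adjoint (T ω) x = l • x} = {0} ∧
      ¬ FiniteDimensional ℂ (LinearMap.ker (T ω : Hil →ₗ[ℂ] Hil)) ∧
      ¬ FiniteDimensional ℂ (LinearMap.ker (ContinuousLinearMap.adjoint (T ω) : Hil →ₗ[ℂ] Hil)) := by

  filter_upwards [ae_infinitely_many_zeros P X hmeas hindep hident hzero] with ω hω
  exact ⟨eig_T _ _ (hT ω) hω, eig_adj _ _ (hT ω) hω,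
    ker_T_infdim _ _ (hT ω) hω, ker_adj_infdim _ _ (hT ω) hω⟩


end
end

section
/- Let T be the random weighted shift associated with i.i.d. nonnegative bounded random variables (X_n)_{n≥1}. Assume X_1 is non-degenerate and P(X_1 = 0) = 0. Then for every fixed bounded operator A on H, P({ω : T(ω) is similar to A}) = 0; consequently, with respect to the product measure P × P, the set {(ω_1, ω_2) : T(ω_1) is similar to T(ω_2)} has measure zero. Here two bounded operators A, B on H are similar if there exists a bounded invertible operator V on H with A V = V B. -/
set_option maxHeartbeats 1000000

open MeasureTheory ProbabilityTheory Filter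

noncomputable section

-- coordinate via inner product
lemma inner_el (m : ℕ) (x : Hil) : @inner ℂ _ _ (el m) x = x m := by
  rw [el, lp.inner_single_left]
  simp

lemma coord_abs_le (x : Hil) (m : ℕ) : ‖x m‖ ≤ ‖x‖ :=
  lp.norm_apply_le_norm two_ne_zero x m

lemma norm_el (n : ℕ) : ‖el n‖ = 1 := by
  have := lp.norm_single (p := 2) (E := fun _ : ℕ => ℂ) (by norm_num) n (1:ℂ)
  simpa [el] using this

-- coordinate functional
def coordFn (m : ℕ) : Hil →L[ℂ] ℂ := innerSL ℂ (el m)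

lemma coordFn_apply (m : ℕ) (x : Hil) : coordFn m x = x m := inner_el m x

lemma el_smul (n : ℕ) (c : ℂ) : lp.single 2 n c = c • el n := by
  rw [el, ← lp.single_smul]
  simp

/-- A continuous linear map applied to `x`, coordinate-wise via basis expansion. -/
lemma clm_coord_hasSum (W : Hil →L[ℂ] Hil) (x : Hil) (m : ℕ) :
    HasSum (fun n => x n * (W (el n)) m) ((W x) m) := by
  have h1 : HasSum (fun n : ℕ => lp.single 2 n (x n)) x :=
    lp.hasSum_single ENNReal.ofNat_ne_top x
  have h2 : HasSum (fun n : ℕ => (coordFn m).comp W (lp.single 2 n (x n)))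
      ((coordFn m).comp W x) := ((coordFn m).comp W).hasSum h1
  have h3 : ∀ n : ℕ, (coordFn m).comp W (lp.single 2 n (x n)) = x n * (W (el n)) m := by
    intro n
    rw [el_smul]
    simp [coordFn_apply, smul_eq_mul]
  simpa [h3, coordFn_apply] using h2

/-- Action of a weighted shift on coordinates. -/
lemma shift_coord {T : Hil →L[ℂ] Hil} {w : ℕ → ℂ}
    (hw : ∀ n, T (el n) = w n • el (n + 1)) (x : Hil) (m : ℕ) :
    (T x) (m + 1) = w m * x m := by
  have h := clm_coord_hasSum T x (m + 1)
  have h2 : (fun n => x n * (T (el n)) (m + 1)) =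
      fun n => if n = m then w m * x m else 0 := by
    funext n
    rw [hw n]
    rcases eq_or_ne n m with rfl | hn
    · simp [el, lp.single_apply_self, mul_comm]
    · have : (el (n+1) : ∀ i, ℂ) (m+1) = 0 := lp.single_apply_ne 2 (n+1) _ (by omega)
      simp [this, hn]
  rw [h2] at h
  exact h.unique (hasSum_ite_eq m (w m * x m))

/-- Some entry in row `m` of an invertible operator is nonzero. -/
lemma row_nonzero (V : Hil ≃L[ℂ] Hil) (m : ℕ) : ∃ n, (V (el n)) m ≠ 0 := by
  by_contra h
  push_neg at h
  set x : Hil := V.symm (el m) with hx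
  have h1 : HasSum (fun n => x n * ((V : Hil →L[ℂ] Hil) (el n)) m)
      (((V : Hil →L[ℂ] Hil) x) m) := clm_coord_hasSum _ x m
  simp only [ContinuousLinearEquiv.coe_coe, h, mul_zero] at h1
  have h2 : ((V : Hil →L[ℂ] Hil) x) m = 0 := h1.unique hasSum_zero
  rw [hx] at h2
  simp only [ContinuousLinearEquiv.coe_coe, ContinuousLinearEquiv.apply_symm_apply] at h2
  rw [el, lp.single_apply_self] at h2
  exact one_ne_zero h2

/-- One-sided comparison of weight products for similar weighted shifts. -/
lemma sim_one_sided (a b : ℕ → ℝ) (C : ℝ)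
    (ha : ∀ n, 0 < a n) (hb : ∀ n, 0 < b n) (hbC : ∀ n, b n ≤ C)
    {Ta Tb : Hil →L[ℂ] Hil}
    (hTa : ∀ n, Ta (el n) = (a n : ℂ) • el (n + 1))
    (hTb : ∀ n, Tb (el n) = (b n : ℂ) • el (n + 1))
    (V : Hil ≃L[ℂ] Hil) (hV : ∀ x, Ta (V x) = V (Tb x)) :
    ∃ K > 0, ∀ k, ∏ i ∈ Finset.range k, a i ≤ K * ∏ i ∈ Finset.range k, b i := by
  obtain ⟨n₀, hn₀⟩ := row_nonzero V 0
  -- the basic recurrence between matrix entries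
  have hrec : ∀ m n : ℕ, (a m : ℂ) * ((V : Hil →L[ℂ] Hil) (el n)) m
      = (b n : ℂ) * ((V : Hil →L[ℂ] Hil) (el (n + 1))) (m + 1) := by
    intro m n
    have h1 : (Ta ((V : Hil →L[ℂ] Hil) (el n))) (m + 1)
        = (a m : ℂ) * ((V : Hil →L[ℂ] Hil) (el n)) m :=
      shift_coord (w := fun i => (a i : ℂ)) hTa _ m
    have h2 : Ta ((V : Hil →L[ℂ] Hil) (el n)) = (b n : ℂ) • ((V : Hil →L[ℂ] Hil) (el (n + 1))) := by
      simp only [ContinuousLinearEquiv.coe_coe]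
      rw [hV (el n), hTb n]
      exact V.map_smul _ _
    rw [h2] at h1
    rw [← h1]
    rw [lp.coeFn_smul, Pi.smul_apply, smul_eq_mul]
  -- the diagonal sequence
  set w : ℕ → ℂ := fun k => ((V : Hil →L[ℂ] Hil) (el (n₀ + k))) k with hw
  have hq_pos : ∀ k, 0 < ∏ i ∈ Finset.range k, (a i / b (n₀ + i)) := fun k =>
    Finset.prod_pos fun i _ => div_pos (ha i) (hb _)
  have key : ∀ k, w k = ((∏ i ∈ Finset.range k, (a i / b (n₀ + i)) : ℝ) : ℂ) * w 0 := by
    intro k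
    induction k with
    | zero => simp
    | succ k ih =>
      have hbne : ((b (n₀ + k) : ℂ)) ≠ 0 := by
        exact_mod_cast (hb (n₀ + k)).ne'
      have hstep : (b (n₀ + k) : ℂ) * w (k + 1) = (a k : ℂ) * w k := by
        rw [hw]
        simp only []
        rw [show n₀ + (k + 1) = n₀ + k + 1 from rfl]
        exact (hrec k (n₀ + k)).symm
      have hthis : w (k + 1) = (a k : ℂ) / (b (n₀ + k) : ℂ) * w k := by
        field_simp
        linear_combination hstep
      rw [hthis, ih, Finset.prod_range_succ]
      push_cast
      ring
  have hw0 : 0 < ‖w 0‖ := by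
    rw [hw]; simpa using norm_pos_iff.2 hn₀
  have hVnorm : ∀ k, ‖w k‖ ≤ ‖(V : Hil →L[ℂ] Hil)‖ := by
    intro k
    calc ‖w k‖ ≤ ‖(V : Hil →L[ℂ] Hil) (el (n₀ + k))‖ := coord_abs_le _ _
    _ ≤ ‖(V : Hil →L[ℂ] Hil)‖ * ‖el (n₀ + k)‖ := (V : Hil →L[ℂ] Hil).le_opNorm _
    _ = ‖(V : Hil →L[ℂ] Hil)‖ := by rw [norm_el]; ring
  have hVpos : 0 < ‖(V : Hil →L[ℂ] Hil)‖ := lt_of_lt_of_le hw0 (hVnorm 0)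
  have hqbound : ∀ k, ∏ i ∈ Finset.range k, (a i / b (n₀ + i))
      ≤ ‖(V : Hil →L[ℂ] Hil)‖ / ‖w 0‖ := by
    intro k
    rw [le_div_iff₀ hw0]
    calc (∏ i ∈ Finset.range k, (a i / b (n₀ + i))) * ‖w 0‖ = ‖w k‖ := by
          rw [key k, norm_mul, Complex.norm_real, Real.norm_eq_abs, abs_of_pos (hq_pos k)]
    _ ≤ _ := hVnorm k
  set C' : ℝ := max C 1 with hC'
  have hC'pos : 0 < C' := lt_of_lt_of_le one_pos (le_max_right _ _)
  have hbC' : ∀ n, b n ≤ C' := fun n => (hbC n).trans (le_max_left _ _)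
  have hPb₀pos : 0 < ∏ i ∈ Finset.range n₀, b i := Finset.prod_pos fun i _ => hb i
  refine ⟨‖(V : Hil →L[ℂ] Hil)‖ / ‖w 0‖ * (C' ^ n₀ / ∏ i ∈ Finset.range n₀, b i),
    mul_pos (div_pos hVpos hw0) (div_pos (pow_pos hC'pos _) hPb₀pos), fun k => ?_⟩
  have h1 : ∏ i ∈ Finset.range k, a i
      = (∏ i ∈ Finset.range k, (a i / b (n₀ + i))) * ∏ i ∈ Finset.range k, b (n₀ + i) := by
    rw [← Finset.prod_mul_distrib]
    exact Finset.prod_congr rfl fun i _ => (div_mul_cancel₀ (a i) (hb _).ne').symm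
  have e3 : ∏ i ∈ Finset.range n₀, b (k + i) ≤ C' ^ n₀ := by
    calc ∏ i ∈ Finset.range n₀, b (k + i) ≤ ∏ i ∈ Finset.range n₀, C' :=
          Finset.prod_le_prod (fun i _ => (hb _).le) (fun i _ => hbC' _)
    _ = C' ^ n₀ := by simp
  have h2 : ∏ i ∈ Finset.range k, b (n₀ + i)
      ≤ C' ^ n₀ / (∏ i ∈ Finset.range n₀, b i) * ∏ i ∈ Finset.range k, b i := by
    rw [div_mul_eq_mul_div, le_div_iff₀ hPb₀pos]
    calc (∏ i ∈ Finset.range k, b (n₀ + i)) * ∏ i ∈ Finset.range n₀, b i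
        = ∏ i ∈ Finset.range (n₀ + k), b i := by
          rw [Finset.prod_range_add]; ring
      _ = (∏ i ∈ Finset.range k, b i) * ∏ i ∈ Finset.range n₀, b (k + i) := by
          rw [show n₀ + k = k + n₀ from Nat.add_comm _ _, Finset.prod_range_add]
      _ ≤ (∏ i ∈ Finset.range k, b i) * C' ^ n₀ :=
          mul_le_mul_of_nonneg_left e3 (Finset.prod_nonneg fun i _ => (hb i).le)
      _ = C' ^ n₀ * ∏ i ∈ Finset.range k, b i := mul_comm _ _
  calc ∏ i ∈ Finset.range k, a i
      = (∏ i ∈ Finset.range k, (a i / b (n₀ + i))) * ∏ i ∈ Finset.range k, b (n₀ + i) := h1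
    _ ≤ (‖(V : Hil →L[ℂ] Hil)‖ / ‖w 0‖)
        * (C' ^ n₀ / (∏ i ∈ Finset.range n₀, b i) * ∏ i ∈ Finset.range k, b i) := by
        apply mul_le_mul (hqbound k) h2 (Finset.prod_nonneg fun i _ => (hb _).le)
        exact (div_pos hVpos hw0).le
    _ = ‖(V : Hil →L[ℂ] Hil)‖ / ‖w 0‖ * (C' ^ n₀ / ∏ i ∈ Finset.range n₀, b i)
        * ∏ i ∈ Finset.range k, b i := by ring


lemma essRange_nonneg {Ω : Type*} [MeasurableSpace Ω] (P : Measure Ω) (f : Ω → ℝ)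
    (hf : ∀ ω, 0 ≤ f ω) {y : ℝ} (hy : y ∈ essRange P f) : 0 ≤ y := by
  by_contra h
  push_neg at h
  have h1 := hy (-y) (by linarith)
  have h2 : {ω | |f ω - y| < -y} = ∅ := by
    ext ω
    simp only [Set.mem_setOf_eq, Set.mem_empty_iff_false, iff_false, not_lt]
    rw [abs_of_pos (by have := hf ω; linarith)]
    have := hf ω; linarith
  rw [h2] at h1
  simp at h1

/-- Core zero-one lemma: the partial sums of `log X i` stay within distance `M` of a fixed
sequence with probability zero. -/
lemma block_null {Ω : Type*} [MeasurableSpace Ω] (P : Measure Ω) [IsProbabilityMeasure P]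
    (X : ℕ → Ω → ℝ) (C : ℝ)
    (hmeas : ∀ n, Measurable (X n))
    (hbdd : ∀ n ω, 0 ≤ X n ω ∧ X n ω ≤ C)
    (hindep : iIndepFun X P)
    (hident : ∀ n, IdentDistrib (X n) (X 0) P P)
    (hnd : ∃ a ∈ essRange P (X 0), ∃ b ∈ essRange P (X 0), a ≠ b)
    (hzero : P {ω | X 0 ω = 0} = 0)
    (aa : ℕ → ℝ) (M : ℝ) :
    P {ω | ∀ n, |(∑ i ∈ Finset.range n, Real.log (X i ω)) - aa n| ≤ M} = 0 := by
  classical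
  set S : ℕ → Ω → ℝ := fun n ω => ∑ i ∈ Finset.range n, Real.log (X i ω) with hS
  set E : Set Ω := {ω | ∀ n, |S n ω - aa n| ≤ M} with hE
  set G : Set Ω := {ω | ∀ n, 0 < X n ω} with hG
  -- G has full measure
  have hGc : P Gᶜ = 0 := by
    have h1 : Gᶜ ⊆ ⋃ n, {ω | X n ω = 0} := by
      intro ω hω
      simp only [hG, Set.mem_compl_iff, Set.mem_setOf_eq, not_forall, not_lt] at hω
      obtain ⟨n, hn⟩ := hω
      exact Set.mem_iUnion.2 ⟨n, le_antisymm hn (hbdd n ω).1⟩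
    refine measure_mono_null h1 (measure_iUnion_null fun n => ?_)
    have : {ω | X n ω = 0} = X n ⁻¹' {0} := rfl
    rw [this, (hident n).measure_mem_eq (measurableSet_singleton 0)]
    exact hzero
  -- extract two distinct essential values
  obtain ⟨a, ha, b, hb, hab⟩ := hnd
  set c : ℝ := min a b with hc
  set d : ℝ := max a b with hd
  have hcE : c ∈ essRange P (X 0) := by
    rcases min_choice a b with h | h <;> rw [hc, h] <;> assumption
  have hdE : d ∈ essRange P (X 0) := by
    rcases max_choice a b with h | h <;> rw [hd, h] <;> assumption
  have hcd : c < d := min_lt_max.2 hab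
  have hc0 : 0 ≤ c := essRange_nonneg P (X 0) (fun ω => (hbdd 0 ω).1) hcE
  set ε : ℝ := (d - c) / 4 with hε
  have hεpos : 0 < ε := by rw [hε]; linarith
  set u₁ : ℝ := c + ε with hu₁
  set u₂ : ℝ := d - ε with hu₂
  have hu₁pos : 0 < u₁ := by rw [hu₁]; linarith
  have hu₁₂ : u₁ < u₂ := by rw [hu₁, hu₂, hε]; linarith
  set δ : ℝ := Real.log u₂ - Real.log u₁ with hδ
  have hδpos : 0 < δ := sub_pos.2 (Real.log_lt_log hu₁pos hu₁₂)
  -- choose the block length k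
  obtain ⟨k₀, hk₀⟩ := exists_nat_gt ((4 * M) / δ)
  set k : ℕ := k₀ + 1 with hk
  have hkpos : 0 < k := Nat.succ_pos _
  have hkδ : 4 * M < k * δ := by
    have : (4 * M) / δ < (k : ℝ) := hk₀.trans_le (by push_cast [hk]; linarith)
    calc 4 * M = (4 * M) / δ * δ := by field_simp
    _ < k * δ := by apply mul_lt_mul_of_pos_right this hδpos
  -- the per-block target values and events
  set tgt : ℕ → ℝ := fun j =>
    if aa ((j + 1) * k) - aa (j * k) ≤ k * Real.log u₁ + 2 * M then d else c with htgt
  set D : ℕ → Set Ω := fun i => X i ⁻¹' Metric.ball (tgt (i / k)) ε with hD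
  have hDm : ∀ i, MeasurableSet (D i) := fun i => (hmeas i) measurableSet_ball
  set Cb : ℕ → Set Ω := fun j => ⋂ i ∈ Finset.Ico (j * k) (j * k + k), D i with hCb
  have hCm : ∀ j, MeasurableSet (Cb j) := fun j =>
    Finset.measurableSet_biInter _ fun i _ => hDm i
  have hdiv : ∀ j i, i ∈ Finset.Ico (j * k) (j * k + k) → i / k = j := by
    intro j i hi
    simp only [Finset.mem_Ico] at hi
    exact Nat.div_eq_of_lt_le hi.1 (by rw [Nat.succ_mul]; exact hi.2)
  -- independence of the blocks
  have hprodD : ∀ (U : Finset ℕ), P (⋂ i ∈ U, D i) = ∏ i ∈ U, P (D i) := by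
    intro U
    exact hindep.measure_inter_preimage_eq_mul U
      (sets := fun i => Metric.ball (tgt (i / k)) ε) (fun i _ => measurableSet_ball)
  have hblocks_disj : ∀ (j j' : ℕ), j ≠ j' →
      Disjoint (Finset.Ico (j * k) (j * k + k)) (Finset.Ico (j' * k) (j' * k + k)) := by
    intro j j' hjj'
    rw [Finset.disjoint_left]
    intro i hi hi'
    exact hjj' ((hdiv j i hi).symm.trans (hdiv j' i hi'))
  have hCind : iIndepSet Cb P := by
    rw [iIndepSet_iff_meas_biInter hCm]
    intro Sf
    have e : (⋂ j ∈ Sf, Cb j)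
        = ⋂ i ∈ Sf.biUnion (fun j => Finset.Ico (j * k) (j * k + k)), D i := by
      ext ω
      simp only [hCb, Set.mem_iInter, Finset.mem_biUnion]
      constructor
      · rintro h i ⟨j, hj, hij⟩
        exact h j hj i hij
      · intro h j hj i hij
        exact h i ⟨j, hj, hij⟩
    rw [e, hprodD, Finset.prod_biUnion (fun j _ j' _ hjj' => hblocks_disj j j' hjj')]
    refine Finset.prod_congr rfl fun j _ => ?_
    rw [hCb]
    exact (hprodD (Finset.Ico (j * k) (j * k + k))).symm
  -- lower bound for the probability of each block event
  set p₁ : ENNReal := P (X 0 ⁻¹' Metric.ball c ε) with hp₁def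
  set p₂ : ENNReal := P (X 0 ⁻¹' Metric.ball d ε) with hp₂def
  have hball : ∀ y : ℝ, {ω | |X 0 ω - y| < ε} = X 0 ⁻¹' Metric.ball y ε := by
    intro y
    ext ω
    simp [Metric.mem_ball, Real.dist_eq]
  have hp₁ : 0 < p₁ := by rw [hp₁def, ← hball c]; exact hcE ε hεpos
  have hp₂ : 0 < p₂ := by rw [hp₂def, ← hball d]; exact hdE ε hεpos
  have hPD : ∀ j, ∀ i ∈ Finset.Ico (j * k) (j * k + k), min p₁ p₂ ≤ P (D i) := by
    intro j i hi
    have : P (D i) = P (X 0 ⁻¹' Metric.ball (tgt (i / k)) ε) :=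
      (hident i).measure_mem_eq measurableSet_ball
    rw [this, hdiv j i hi]
    simp only [htgt]
    by_cases hcase : aa ((j + 1) * k) - aa (j * k) ≤ k * Real.log u₁ + 2 * M
    · rw [if_pos hcase]; exact min_le_right _ _
    · rw [if_neg hcase]; exact min_le_left _ _
  have hCb_lb : ∀ j, (min p₁ p₂) ^ k ≤ P (Cb j) := by
    intro j
    have e1 : P (Cb j) = ∏ i ∈ Finset.Ico (j * k) (j * k + k), P (D i) := by
      rw [hCb]; exact hprodD _
    rw [e1]
    calc (min p₁ p₂) ^ k = ∏ _i ∈ Finset.Ico (j * k) (j * k + k), min p₁ p₂ := by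
          rw [Finset.prod_const, Nat.card_Ico]
          congr 1
          omega
    _ ≤ ∏ i ∈ Finset.Ico (j * k) (j * k + k), P (D i) :=
          Finset.prod_le_prod' fun i hi => hPD j i hi
  have htsum : ∑' j, P (Cb j) = ⊤ := by
    refine eq_top_iff.2 ?_
    have hr : (min p₁ p₂) ^ k ≠ 0 := pow_ne_zero _ (lt_min hp₁ hp₂).ne'
    calc (⊤ : ENNReal) = ∑' _j : ℕ, (min p₁ p₂) ^ k :=
          (ENNReal.tsum_const_eq_top_of_ne_zero hr).symm
    _ ≤ ∑' j, P (Cb j) := ENNReal.tsum_le_tsum fun j => hCb_lb j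
  have hlimsup : P (limsup Cb atTop) = 1 := measure_limsup_eq_one hCm hCind htsum
  -- E ∩ G misses every block event
  have hu₂pos : 0 < u₂ := hu₁pos.trans hu₁₂
  have hempty : ∀ j, E ∩ G ∩ Cb j = ∅ := by
    intro j
    rw [Set.eq_empty_iff_forall_notMem]
    rintro ω ⟨⟨hωE, hωG⟩, hωC⟩
    simp only [hE, Set.mem_setOf_eq] at hωE
    simp only [hG, Set.mem_setOf_eq] at hωG
    simp only [hCb, Set.mem_iInter] at hωC
    have hωD : ∀ i ∈ Finset.Ico (j * k) (j * k + k), |X i ω - tgt j| < ε := by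
      intro i hi
      have := hωC i hi
      rw [hD] at this
      simp only [Set.mem_preimage, Metric.mem_ball, Real.dist_eq] at this
      rwa [hdiv j i hi] at this
    have hidx : (j + 1) * k = j * k + k := by ring
    have hΔ : ∑ i ∈ Finset.Ico (j * k) (j * k + k), Real.log (X i ω)
        = S (j * k + k) ω - S (j * k) ω := by
      rw [hS]
      exact Finset.sum_Ico_eq_sub _ (Nat.le_add_right _ _)
    have hE1 := hωE (j * k)
    have hE2 := hωE (j * k + k)
    rw [abs_le] at hE1 hE2
    by_cases hcase : aa ((j + 1) * k) - aa (j * k) ≤ k * Real.log u₁ + 2 * M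
    · -- target is d : the block sum is too large
      have htj : tgt j = d := by simp only [htgt]; rw [if_pos hcase]
      have hlow : ∀ i ∈ Finset.Ico (j * k) (j * k + k), Real.log u₂ ≤ Real.log (X i ω) := by
        intro i hi
        have h1 := hωD i hi
        rw [htj, abs_lt] at h1
        exact Real.log_le_log hu₂pos (by rw [hu₂]; linarith [h1.1])
      have hsum : (k : ℝ) * Real.log u₂
          ≤ ∑ i ∈ Finset.Ico (j * k) (j * k + k), Real.log (X i ω) := by
        have := Finset.card_nsmul_le_sum (Finset.Ico (j * k) (j * k + k))
          (fun i => Real.log (X i ω)) (Real.log u₂) hlow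
        rwa [Nat.card_Ico, show j * k + k - j * k = k by omega, nsmul_eq_mul] at this
      rw [hidx] at hcase
      have hδexp : δ = Real.log u₂ - Real.log u₁ := hδ
      rw [hΔ] at hsum
      nlinarith [hkδ, hE1.1, hE1.2, hE2.1, hE2.2]
    · -- target is c : the block sum is too small
      have htj : tgt j = c := by simp only [htgt]; rw [if_neg hcase]
      have hhigh : ∀ i ∈ Finset.Ico (j * k) (j * k + k), Real.log (X i ω) ≤ Real.log u₁ := by
        intro i hi
        have h1 := hωD i hi
        rw [htj, abs_lt] at h1
        exact Real.log_le_log (hωG i) (by rw [hu₁]; linarith [h1.2])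
      have hsum : ∑ i ∈ Finset.Ico (j * k) (j * k + k), Real.log (X i ω)
          ≤ (k : ℝ) * Real.log u₁ := by
        have := Finset.sum_le_card_nsmul (Finset.Ico (j * k) (j * k + k))
          (fun i => Real.log (X i ω)) (Real.log u₁) hhigh
        rwa [Nat.card_Ico, show j * k + k - j * k = k by omega, nsmul_eq_mul] at this
      rw [hidx] at hcase
      push_neg at hcase
      rw [hΔ] at hsum
      linarith [hE1.1, hE1.2, hE2.1, hE2.2]
  -- conclusion
  have hsub : E ∩ G ⊆ (limsup Cb atTop)ᶜ := by
    intro ω hω hmem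
    rw [mem_limsup_iff_frequently_mem] at hmem
    obtain ⟨j, hj⟩ := hmem.exists
    have : ω ∈ E ∩ G ∩ Cb j := ⟨hω, hj⟩
    rw [hempty j] at this
    exact this
  have hclosed : P ((limsup Cb atTop)ᶜ) = 0 := by
    rw [measure_compl (MeasurableSet.measurableSet_limsup hCm) (measure_ne_top _ _), hlimsup, measure_univ]
    simp
  have h1 : P (E ∩ G) = 0 := measure_mono_null hsub hclosed
  have h2 : P (E \ G) = 0 := measure_mono_null (fun ω hω => hω.2) hGc
  have := measure_le_inter_add_diff P E G
  rw [h1, h2, add_zero] at this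
  exact le_antisymm this (zero_le)

/-- Two bounded operators are similar if they are intertwined by a bounded invertible
operator (with bounded inverse): `A V = V B`. -/
def OpSimilar (A B : Hil →L[ℂ] Hil) : Prop :=
  ∃ V : Hil ≃L[ℂ] Hil, ∀ x : Hil, A (V x) = V (B x)

lemma OpSimilar.symm {A B : Hil →L[ℂ] Hil} (h : OpSimilar A B) : OpSimilar B A := by
  obtain ⟨V, hV⟩ := h
  refine ⟨V.symm, fun y => ?_⟩
  have := hV (V.symm y)
  rw [V.apply_symm_apply] at this
  rw [this, V.symm_apply_apply]

lemma OpSimilar.trans {A B C : Hil →L[ℂ] Hil} (h1 : OpSimilar A B) (h2 : OpSimilar B C) :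
    OpSimilar A C := by
  obtain ⟨V, hV⟩ := h1
  obtain ⟨W, hW⟩ := h2
  refine ⟨W.trans V, fun x => ?_⟩
  simp only [ContinuousLinearEquiv.trans_apply]
  rw [hV (W x), hW x]

lemma sim_log_bound (a b : ℕ → ℝ) (C : ℝ)
    (ha : ∀ n, 0 < a n) (haC : ∀ n, a n ≤ C) (hb : ∀ n, 0 < b n) (hbC : ∀ n, b n ≤ C)
    {Ta Tb : Hil →L[ℂ] Hil}
    (hTa : ∀ n, Ta (el n) = (a n : ℂ) • el (n + 1))
    (hTb : ∀ n, Tb (el n) = (b n : ℂ) • el (n + 1))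
    (h : OpSimilar Ta Tb) :
    ∃ M : ℕ, ∀ k, |(∑ i ∈ Finset.range k, Real.log (a i))
      - ∑ i ∈ Finset.range k, Real.log (b i)| ≤ M := by
  obtain ⟨W, hW⟩ := h.symm
  obtain ⟨V, hV⟩ := h
  obtain ⟨K₁, hK₁, h1⟩ := sim_one_sided a b C ha hb hbC hTa hTb V hV
  obtain ⟨K₂, hK₂, h2⟩ := sim_one_sided b a C hb ha haC hTb hTa W hW
  refine ⟨⌈max (Real.log K₁) (Real.log K₂)⌉₊, fun k => ?_⟩
  have hPa : 0 < ∏ i ∈ Finset.range k, a i := Finset.prod_pos fun i _ => ha i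
  have hPb : 0 < ∏ i ∈ Finset.range k, b i := Finset.prod_pos fun i _ => hb i
  have hla : ∑ i ∈ Finset.range k, Real.log (a i) = Real.log (∏ i ∈ Finset.range k, a i) :=
    (Real.log_prod fun i _ => (ha i).ne').symm
  have hlb : ∑ i ∈ Finset.range k, Real.log (b i) = Real.log (∏ i ∈ Finset.range k, b i) :=
    (Real.log_prod fun i _ => (hb i).ne').symm
  rw [hla, hlb, abs_le]
  constructor
  · have := Real.log_le_log hPb (h2 k)
    rw [Real.log_mul hK₂.ne' hPa.ne'] at this
    have h3 : Real.log K₂ ≤ ⌈max (Real.log K₁) (Real.log K₂)⌉₊ :=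
      (le_max_right _ _).trans (Nat.le_ceil _)
    linarith
  · have := Real.log_le_log hPa (h1 k)
    rw [Real.log_mul hK₁.ne' hPb.ne'] at this
    have h3 : Real.log K₁ ≤ ⌈max (Real.log K₁) (Real.log K₂)⌉₊ :=
      (le_max_left _ _).trans (Nat.le_ceil _)
    linarith


lemma Gnull {Ω : Type*} [MeasurableSpace Ω] (P : Measure Ω)
    (X : ℕ → Ω → ℝ) (hbdd : ∀ n ω, 0 ≤ X n ω)
    (hident : ∀ n, IdentDistrib (X n) (X 0) P P)
    (hzero : P {ω | X 0 ω = 0} = 0) :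
    P {ω | ∀ n, 0 < X n ω}ᶜ = 0 := by
  have h1 : {ω | ∀ n, 0 < X n ω}ᶜ ⊆ ⋃ n, {ω | X n ω = 0} := by
    intro ω hω
    simp only [Set.mem_compl_iff, Set.mem_setOf_eq, not_forall, not_lt] at hω
    obtain ⟨n, hn⟩ := hω
    exact Set.mem_iUnion.2 ⟨n, le_antisymm hn (hbdd n ω)⟩
  refine measure_mono_null h1 (measure_iUnion_null fun n => ?_)
  have : {ω | X n ω = 0} = X n ⁻¹' {0} := rfl
  rw [this, (hident n).measure_mem_eq (measurableSet_singleton 0)]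
  exact hzero

/-- if `X_1` is non-degenerate and `P(X_1 = 0) = 0`, then `T(ω)` is almost surely
not similar to any fixed operator `A`, and the set of pairs `(ω₁, ω₂)` with `T(ω₁)` similar
to `T(ω₂)` is a `P × P`-null set. -/
theorem stmt_5
    {Ω : Type*} [MeasurableSpace Ω] (P : Measure Ω) [IsProbabilityMeasure P]
    (X : ℕ → Ω → ℝ) (C : ℝ)
    (hmeas : ∀ n, Measurable (X n))
    (hbdd : ∀ n ω, 0 ≤ X n ω ∧ X n ω ≤ C)
    (hindep : iIndepFun X P)
    (hident : ∀ n, IdentDistrib (X n) (X 0) P P)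
    (T : Ω → Hil →L[ℂ] Hil)
    (hT : ∀ ω n, T ω (el n) = (X n ω : ℂ) • el (n + 1))
    (hnd : ∃ a ∈ essRange P (X 0), ∃ b ∈ essRange P (X 0), a ≠ b)
    (hzero : P {ω | X 0 ω = 0} = 0) :
    (∀ A : Hil →L[ℂ] Hil, P {ω | OpSimilar (T ω) A} = 0) ∧
    (P.prod P) {p : Ω × Ω | OpSimilar (T p.1) (T p.2)} = 0 := by
  classical
  set G : Set Ω := {ω | ∀ n, 0 < X n ω} with hG
  have hGc : P Gᶜ = 0 := Gnull P X (fun n ω => (hbdd n ω).1) hident hzero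
  set S : ℕ → Ω → ℝ := fun n ω => ∑ i ∈ Finset.range n, Real.log (X i ω) with hSdef
  have hSmeas : ∀ n, Measurable (S n) :=
    fun n => Finset.measurable_sum _ (fun i _ => (hmeas i).log)
  have hkey : ∀ ω₁ ω₂, ω₁ ∈ G → ω₂ ∈ G → OpSimilar (T ω₁) (T ω₂) →
      ∃ M : ℕ, ∀ n, |S n ω₁ - S n ω₂| ≤ (M : ℝ) := by
    intro ω₁ ω₂ h1 h2 hsim
    exact sim_log_bound (fun n => X n ω₁) (fun n => X n ω₂) C h1 (fun n => (hbdd n ω₁).2)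
      h2 (fun n => (hbdd n ω₂).2) (fun n => hT ω₁ n) (fun n => hT ω₂ n) hsim
  have hnull : ∀ (aa : ℕ → ℝ) (M : ℝ), P {ω | ∀ n, |S n ω - aa n| ≤ M} = 0 :=
    fun aa M => block_null P X C hmeas hbdd hindep hident hnd hzero aa M
  constructor
  · intro A
    have hmain : P ({ω | OpSimilar (T ω) A} ∩ G) = 0 := by
      by_cases hne : ({ω | OpSimilar (T ω) A} ∩ G).Nonempty
      · obtain ⟨ω₀, hω₀, hω₀G⟩ := hne
        have hsub : {ω | OpSimilar (T ω) A} ∩ G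
            ⊆ ⋃ M : ℕ, {ω | ∀ n, |S n ω - S n ω₀| ≤ (M : ℝ)} := by
          rintro ω ⟨hω, hωG⟩
          obtain ⟨M, hM⟩ := hkey ω ω₀ hωG hω₀G (OpSimilar.trans hω (OpSimilar.symm hω₀))
          exact Set.mem_iUnion.2 ⟨M, hM⟩
        exact measure_mono_null hsub
          (measure_iUnion_null fun M => hnull (fun n => S n ω₀) M)
      · rw [Set.not_nonempty_iff_eq_empty] at hne
        rw [hne]
        exact measure_empty
    have h2 : P ({ω | OpSimilar (T ω) A} \ G) = 0 :=
      measure_mono_null (fun ω hω => hω.2) hGc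
    have h3 := measure_le_inter_add_diff P {ω | OpSimilar (T ω) A} G
    rw [hmain, h2, add_zero] at h3
    exact le_antisymm h3 (zero_le)
  · set B : ℕ → Set (Ω × Ω) := fun M => {p | ∀ n, |S n p.1 - S n p.2| ≤ (M : ℝ)} with hB
    have hBm : ∀ M, MeasurableSet (B M) := by
      intro M
      have e : B M = ⋂ n, {p : Ω × Ω | |S n p.1 - S n p.2| ≤ (M : ℝ)} := by
        ext p; simp [hB]
      rw [e]
      refine MeasurableSet.iInter fun n => ?_
      have hm : Measurable fun p : Ω × Ω => |S n p.1 - S n p.2| :=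
        (((hSmeas n).comp measurable_fst).sub ((hSmeas n).comp measurable_snd)).abs
      exact measurableSet_le hm measurable_const
    have hB0 : ∀ M : ℕ, (P.prod P) (B M) = 0 := by
      intro M
      rw [Measure.prod_apply (hBm M)]
      have hsl : ∀ ω₁, P (Prod.mk ω₁ ⁻¹' B M) = 0 := by
        intro ω₁
        have e : Prod.mk ω₁ ⁻¹' B M = {ω₂ | ∀ n, |S n ω₂ - S n ω₁| ≤ ((M : ℕ) : ℝ)} := by
          ext ω₂
          simp only [hB, Set.mem_preimage, Set.mem_setOf_eq]
          constructor <;> intro h n <;> rw [abs_sub_comm] <;> exact h n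
        rw [e]
        exact hnull (fun n => S n ω₁) M
      simp [hsl]
    have hsub : {p : Ω × Ω | OpSimilar (T p.1) (T p.2)}
        ⊆ ((Gᶜ ×ˢ Set.univ) ∪ (Set.univ ×ˢ Gᶜ)) ∪ ⋃ M : ℕ, B M := by
      rintro ⟨ω₁, ω₂⟩ hp
      by_cases h1 : ω₁ ∈ G
      · by_cases h2 : ω₂ ∈ G
        · obtain ⟨M, hM⟩ := hkey ω₁ ω₂ h1 h2 hp
          exact Or.inr (Set.mem_iUnion.2 ⟨M, hM⟩)
        · exact Or.inl (Or.inr ⟨Set.mem_univ _, h2⟩)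
      · exact Or.inl (Or.inl ⟨h1, Set.mem_univ _⟩)
    refine measure_mono_null hsub (measure_union_null (measure_union_null ?_ ?_)
      (measure_iUnion_null hB0))
    · rw [Measure.prod_prod, hGc, zero_mul]
    · rw [Measure.prod_prod, hGc, mul_zero]

end
end
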